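/- In the setting of the previous module-theoretic statement, suppose additionally that each c_i is invertible modulo p (i.e. c_i is a unit in A, A being p-adically complete local with c_i ≢ 0 mod the maximal ideal containing p). Then the cokernel of A·ω^{(0)} ⊕ A·ω^{(1)} → M/N is a cyclic A/N-module generated by the class of ω^{(m+2)}; more precisely, by induction, the class of ω^{(j−1)} lies in p·A·(class of ω^{(j)}) for every j = 1, …, m+2. -/

import Mathlib

/-!
Since `A` is `p`-adically complete, `p` lies in its Jacobson radical, so `c - p * a` is a unit
whenever `c` is. Write `vⱼ` for the class of `ω⁽ʲ⁾` in the cokernel; then `v₀ = 0`, and if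
`vᵢ = p a • vᵢ₊₁`, the relation `p • vᵢ₊₂ - cᵢ • vᵢ₊₁ + vᵢ = 0` becomes
`(cᵢ - p a) • vᵢ₊₁ = p • vᵢ₊₂`, whence `vᵢ₊₁ ∈ p A • vᵢ₊₂`. So every `vⱼ`, and hence the whole
cokernel, lies in `A ∙ v_{m+2}`.
-/

theorem IsUnit.sub_of_mem_jacobson_bot {R : Type*} [CommRing R] {u x : R} (hu : IsUnit u)
    (hx : x ∈ (⊥ : Ideal R).jacobson) : IsUnit (u - x) := by
  obtain ⟨v, rfl⟩ := hu
  have hunit := Ideal.mem_jacobson_bot.1 hx (-↑v⁻¹)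
  have hfactor : (v : R) - x = v * (x * -↑v⁻¹ + 1) := by
    linear_combination x * v.mul_inv
  exact hfactor ▸ v.isUnit.mul hunit

section Recurrence

variable {A M : Type*} [CommRing A] [AddCommGroup M] [Module A M] {ϖ : A}

theorem exists_eq_mul_smul_of_recurrence (hϖ : ϖ ∈ (⊥ : Ideal A).jacobson) {a c : A} {x y z : M}
    (hc : IsUnit c) (hx : x = (ϖ * a) • y) (hrel : ϖ • z - c • y + x = 0) :
    ∃ b, y = (ϖ * b) • z := by
  obtain ⟨w, hw⟩ := hc.sub_of_mem_jacobson_bot (Ideal.mul_mem_right a _ hϖ)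
  have hyz : (c - ϖ * a) • y = ϖ • z := by
    rw [sub_smul, ← hx]; linear_combination (norm := module) -hrel
  refine ⟨↑w⁻¹, ?_⟩
  rw [mul_comm, mul_smul, ← hyz, ← hw, ← mul_smul, Units.inv_mul, one_smul]

theorem exists_eq_mul_smul_succ_of_recurrence (hϖ : ϖ ∈ (⊥ : Ideal A).jacobson) (v : ℕ → M)
    (n : ℕ) (h0 : ∃ a, v 0 = (ϖ * a) • v 1)
    (hrel : ∀ i < n, ∃ c : A, IsUnit c ∧ ϖ • v (i + 2) - c • v (i + 1) + v i = 0) :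
    ∀ j ≤ n, ∃ a, v j = (ϖ * a) • v (j + 1) := by
  intro j hj
  induction j with
  | zero => exact h0
  | succ j ih =>
    obtain ⟨a, ha⟩ := ih (by omega)
    obtain ⟨c, hc, hrelj⟩ := hrel j (by omega)
    exact exists_eq_mul_smul_of_recurrence hϖ hc ha hrelj

end Recurrence

theorem mem_span_singleton_of_forall_mem_span_singleton_succ {A M : Type*} [Semiring A]
    [AddCommMonoid M] [Module A M] {v : ℕ → M} {n : ℕ}
    (h : ∀ j < n, v j ∈ A ∙ v (j + 1)) : ∀ j ≤ n, v j ∈ A ∙ v n := by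
  induction n with
  | zero => intro j hj; simp [Nat.le_zero.1 hj, Submodule.mem_span_singleton_self]
  | succ n ih =>
    intro j hj
    rcases Nat.lt_or_eq_of_le hj with hj | rfl
    · exact Submodule.span_singleton_le_iff_mem _ _ |>.2 (h n n.lt_succ_self)
        (ih (fun j hj => h j (by omega)) j (by omega))
    · exact Submodule.mem_span_singleton_self _

theorem LinearMap.mem_of_forall_single_mem {A M ι : Type*} [CommSemiring A] [AddCommMonoid M]
    [Module A M] [Finite ι] [DecidableEq ι] (f : (ι → A) →ₗ[A] M) {S : Submodule A M}
    (h : ∀ i, f (Pi.single i 1) ∈ S) (x : ι → A) : f x ∈ S := by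
  have hx : x ∈ Submodule.span A (Set.range fun i => Pi.single i (1 : A)) := by
    convert (Pi.basisFun A ι).mem_span x
    exact (Pi.basisFun_apply A ι _).symm
  exact (Submodule.map_span_le f _ S).2 (by simpa using h) (Submodule.mem_map_of_mem hx)

/-- In the setting of the previous statement, suppose additionally that `A` is
`p`-adically complete and each `cᵢ` is a unit.  Then the cokernel of
`A·ω⁽⁰⁾ ⊕ A·ω⁽¹⁾ → M/N` is a cyclic module generated by the class of `ω⁽ᵐ⁺²⁾`; more
precisely the class of `ω⁽ʲ⁻¹⁾` lies in `p·A·(class of ω⁽ʲ⁾)` for every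
`j = 1,…,m+2`. -/
theorem cokernel_cyclic_generated_by_top
    (A : Type*) [CommRing A] (p : ℕ)
    (hcomp : IsAdicComplete (Ideal.span {(p : A)}) A)
    (m : ℕ) (c : Fin (m + 1) → A) (hc : ∀ i, IsUnit (c i)) :
    let e : Fin (m + 3) → (Fin (m + 3) → A) := fun i => Pi.single i 1
    let N : Submodule A (Fin (m + 3) → A) :=
      Submodule.span A (Set.range fun i : Fin (m + 1) =>
        (p : A) • e ⟨(i : ℕ) + 2, by have := i.isLt; omega⟩ -
          c i • e ⟨(i : ℕ) + 1, by have := i.isLt; omega⟩ +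
          e ⟨(i : ℕ), by have := i.isLt; omega⟩)
    let P : Submodule A (Fin (m + 3) → A) := Submodule.span A {e 0, e 1}
    let π := Submodule.mkQ (N ⊔ P)
    (∀ x : Fin (m + 3) → A, ∃ a : A, π x = a • π (e ⟨m + 2, by omega⟩)) ∧
    (∀ j : ℕ, ∀ _hj1 : 1 ≤ j, ∀ _hj2 : j ≤ m + 2, ∃ a : A,
      π (e ⟨j - 1, by omega⟩) = ((p : A) * a) • π (e ⟨j, by omega⟩)) := by
  intro e N P π
  set v : ℕ → _ := fun k => if hk : k < m + 3 then π (e ⟨k, hk⟩) else 0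
  have hv (k : ℕ) (hk : k < m + 3) : π (e ⟨k, hk⟩) = v k := by simp [v, hk]
  have hp : (p : A) ∈ (⊥ : Ideal A).jacobson :=
    IsAdicComplete.le_jacobson_bot _ (Ideal.mem_span_singleton_self _)
  have hv0 : v 0 = 0 := by
    rw [← hv 0 (by omega), Submodule.mkQ_apply, Submodule.Quotient.mk_eq_zero]
    exact Submodule.mem_sup_right (Submodule.subset_span (by simp))
  have hrel (i : ℕ) (hi : i < m + 1) :
      ∃ c : A, IsUnit c ∧ (p : A) • v (i + 2) - c • v (i + 1) + v i = 0 := by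
    refine ⟨c ⟨i, hi⟩, hc _, ?_⟩
    rw [← hv i (by omega), ← hv (i + 1) (by omega), ← hv (i + 2) (by omega), ← map_smul,
      ← map_smul, ← map_sub, ← map_add, Submodule.mkQ_apply, Submodule.Quotient.mk_eq_zero]
    exact Submodule.mem_sup_left (Submodule.subset_span ⟨⟨i, hi⟩, rfl⟩)
  have hstep := exists_eq_mul_smul_succ_of_recurrence hp v (m + 1) ⟨0, by simp [hv0]⟩ hrel
  have hspan : ∀ j ≤ m + 2, v j ∈ A ∙ v (m + 2) :=
    mem_span_singleton_of_forall_mem_span_singleton_succ fun j hj => by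
      obtain ⟨a, ha⟩ := hstep j (by omega)
      exact Submodule.mem_span_singleton.2 ⟨_, ha.symm⟩
  refine ⟨fun x => ?_, fun j hj1 hj2 => ?_⟩
  · rw [hv]
    obtain ⟨a, ha⟩ := Submodule.mem_span_singleton.1 <|
      π.mem_of_forall_single_mem (fun i => hv i i.isLt ▸ hspan i (by omega)) x
    exact ⟨a, ha.symm⟩
  · obtain ⟨a, ha⟩ := hstep (j - 1) (by omega)
    refine ⟨a, ?_⟩
    rw [hv, hv, ha, Nat.sub_add_cancel hj1]
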